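/- arXiv:1503.07030 — 9 statements merged into one kernel-verified Lean document; each statement's English description precedes it below -/
import Mathlib

section
/- For a shelf (S, ◁) and an abelian group A, the rack differential d^k defined by (d^k φ)(a_1,...,a_{k+1}) = Σ_{i=1}^{k} (-1)^{i-1} (φ(a_1,...,a_{i-1}, a_i ◁ a_{i+1}, ..., a_i ◁ a_{k+1}) − φ(a_1,...,a_{i-1}, a_{i+1}, ..., a_{k+1})) satisfies d^{k+1} ∘ d^k = 0. -/
/-!
Write the rack differential as `Σ_i Σ_ε (-1)^i w(ε) φ ∘ ∂_i^ε`, where `∂_i^ε` with `ε = true` lets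
`a_i` act on the later entries, `ε = false` just deletes `a_i`, and `w(true) = 1`, `w(false) = -1`.
Self-distributivity says exactly that `a ↦ x ◁ a` is an endomorphism of `◁`, which gives the
semi-simplicial identities `∂_j^δ ∂_i^ε = ∂_{i-1}^ε ∂_j^δ` for `j < i` and all labels.
In the double sum for `d ∘ d`, the involution `(i, ε, j, δ) ↦ (i.succAbove j, δ, j.predAbove i, ε)`
has no fixed points and, by these identities, pairs each term with its negative.
-/

/-- The rack differential `d^k : C^k(S,A) → C^{k+1}(S,A)` of the shelf `(S, op)`:
`(d^k φ)(a_1,…,a_{k+1}) = ∑_{i=1}^k (-1)^{i-1} (φ(a_1,…,a_{i-1}, a_i ◁ a_{i+1},…, a_i ◁ a_{k+1})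
− φ(a_1,…,a_{i-1}, a_{i+1},…,a_{k+1}))` (written with 0-based indexing). -/
def shelfD {S A : Type} [AddCommGroup A] (op : S → S → S) (k : ℕ)
    (φ : (Fin k → S) → A) : (Fin (k + 1) → S) → A := fun a =>
  ∑ i : Fin k, ((-1 : ℤ) ^ (i : ℕ)) •
    (φ (fun j => if (i : ℕ) ≤ (j : ℕ) then op (a i.castSucc) (a j.succ) else a j.castSucc)
      - φ (fun j => if (i : ℕ) ≤ (j : ℕ) then a j.succ else a j.castSucc))

section AlternatingFaceSum

variable {X : ℕ → Type*} {L A : Type*} [AddCommGroup A]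

def alternatingFaceSum [Fintype L] (face : (n : ℕ) → L → Fin n → X (n + 1) → X n) (w : L → ℤ)
    (n : ℕ) (φ : X n → A) (a : X (n + 1)) : A :=
  ∑ i : Fin n, ∑ ε : L, ((-1 : ℤ) ^ (i : ℕ) * w ε) • φ (face n ε i a)

def FacesCommute (face : (n : ℕ) → L → Fin n → X (n + 1) → X n) : Prop :=
  ∀ (n : ℕ) (ε δ : L) (i : Fin (n + 1)) (j : Fin n) (h : j.castSucc < i) (a : X (n + 2)),
    face n δ j (face (n + 1) ε i a) =
      face n ε (i.pred (Fin.ne_zero_of_lt h)) (face (n + 1) δ j.castSucc a)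

theorem FacesCommute.face_face {face : (n : ℕ) → L → Fin n → X (n + 1) → X n}
    (hface : FacesCommute face) {n : ℕ} (ε δ : L) (i : Fin (n + 1)) (j : Fin n)
    (a : X (n + 2)) :
    face n δ j (face (n + 1) ε i a) =
      face n ε (j.predAbove i) (face (n + 1) δ (i.succAbove j) a) := by
  rcases lt_or_ge j.castSucc i with h | h
  · rw [Fin.predAbove_of_castSucc_lt _ _ h, Fin.succAbove_of_castSucc_lt _ _ h,
      hface _ _ _ _ _ h]
  · have h' : (i.castPred (Fin.ne_last_of_lt (Fin.le_castSucc_iff.mp h))).castSucc < j.succ := by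
      simpa [Fin.lt_def, Fin.le_def, Nat.lt_succ_iff] using h
    rw [Fin.predAbove_of_le_castSucc _ _ h, Fin.succAbove_of_le_castSucc _ _ h,
      hface _ _ _ _ _ h', Fin.pred_succ, Fin.castSucc_castPred]

theorem neg_one_pow_succAbove_add_predAbove {n : ℕ} (i : Fin (n + 1)) (j : Fin n) :
    (-1 : ℤ) ^ ((i.succAbove j : ℕ) + (j.predAbove i : ℕ)) = -(-1) ^ ((i : ℕ) + (j : ℕ)) := by
  rcases lt_or_ge j.castSucc i with h | h
  · have hsum : (i : ℕ) + j = (i.succAbove j : ℕ) + (j.predAbove i : ℕ) + 1 := by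
      rw [Fin.predAbove_of_castSucc_lt _ _ h, Fin.succAbove_of_castSucc_lt _ _ h]
      simp only [Fin.lt_def, Fin.val_castSucc, Fin.val_pred] at h ⊢
      omega
    rw [hsum, pow_succ, mul_neg_one, neg_neg]
  · have hsum : (i.succAbove j : ℕ) + (j.predAbove i : ℕ) = (i : ℕ) + j + 1 := by
      rw [Fin.predAbove_of_le_castSucc _ _ h, Fin.succAbove_of_le_castSucc _ _ h]
      simp only [Fin.val_succ, Fin.coe_castPred]
      omega
    rw [hsum, pow_succ, mul_neg_one]

def swapFaces (n : ℕ) (x : Fin (n + 1) × L × Fin n × L) : Fin (n + 1) × L × Fin n × L :=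
  (x.1.succAbove x.2.2.1, x.2.2.2, x.2.2.1.predAbove x.1, x.2.1)

theorem swapFaces_swapFaces (n : ℕ) (x : Fin (n + 1) × L × Fin n × L) :
    swapFaces n (swapFaces n x) = x := by
  simp [swapFaces, Fin.succAbove_succAbove_predAbove, Fin.predAbove_predAbove_succAbove]

theorem swapFaces_ne (n : ℕ) (x : Fin (n + 1) × L × Fin n × L) : swapFaces n x ≠ x :=
  fun h => Fin.succAbove_ne x.1 x.2.2.1 (congrArg Prod.fst h)

theorem alternatingFaceSum_alternatingFaceSum_apply [Fintype L]
    (face : (n : ℕ) → L → Fin n → X (n + 1) → X n) (w : L → ℤ) {n : ℕ} (φ : X n → A)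
    (a : X (n + 2)) :
    alternatingFaceSum face w (n + 1) (alternatingFaceSum face w n φ) a =
      ∑ x : Fin (n + 1) × L × Fin n × L,
        ((-1 : ℤ) ^ ((x.1 : ℕ) + (x.2.2.1 : ℕ)) * w x.2.1 * w x.2.2.2) •
          φ (face n x.2.2.2 x.2.2.1 (face (n + 1) x.2.1 x.1 a)) := by
  simp only [alternatingFaceSum, Fintype.sum_prod_type, Finset.smul_sum, smul_smul]
  refine Fintype.sum_congr _ _ fun i => Fintype.sum_congr _ _ fun ε =>
    Fintype.sum_congr _ _ fun j => Fintype.sum_congr _ _ fun δ => ?_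
  rw [pow_add]
  congr 1
  ring

theorem FacesCommute.alternatingFaceSum_alternatingFaceSum [Fintype L]
    {face : (n : ℕ) → L → Fin n → X (n + 1) → X n} (hface : FacesCommute face) (w : L → ℤ)
    {n : ℕ} (φ : X n → A) :
    alternatingFaceSum face w (n + 1) (alternatingFaceSum face w n φ) = 0 := by
  funext a
  rw [alternatingFaceSum_alternatingFaceSum_apply]
  refine Finset.sum_ninvolution (swapFaces n) (fun ⟨i, ε, j, δ⟩ => ?_)
    (fun x _ => swapFaces_ne n x) (fun _ => Finset.mem_univ _) (swapFaces_swapFaces n)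
  simp only [swapFaces, neg_one_pow_succAbove_add_predAbove, ← hface.face_face, ← add_smul]
  rw [show (-1 : ℤ) ^ ((i : ℕ) + j) * w ε * w δ + -(-1) ^ ((i : ℕ) + j) * w δ * w ε = 0 by ring,
    zero_smul]

end AlternatingFaceSum

section RackFaces

variable {S : Type*} (op : S → S → S)

def rackAct (ε : Bool) (x y : S) : S := bif ε then op x y else y

theorem rackAct_rackAct (sd : ∀ a b c : S, op a (op b c) = op (op a b) (op a c))
    (ε δ : Bool) (x y z : S) :
    rackAct op δ x (rackAct op ε y z) = rackAct op ε (rackAct op δ x y) (rackAct op δ x z) := by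
  cases ε <;> cases δ <;> first | rfl | exact sd x y z

def rackFace (n : ℕ) (ε : Bool) (i : Fin n) (a : Fin (n + 1) → S) : Fin n → S :=
  fun j => if (i : ℕ) ≤ (j : ℕ) then rackAct op ε (a i.castSucc) (a j.succ) else a j.castSucc

theorem rackFace_facesCommute (sd : ∀ a b c : S, op a (op b c) = op (op a b) (op a c)) :
    FacesCommute (X := fun n => Fin n → S) (rackFace op) := by
  intro n ε δ i j h a
  funext m
  have hji : (j : ℕ) < i := h
  simp only [rackFace, Fin.val_castSucc, Fin.val_succ, Fin.val_pred]
  -- Entries below `i - 1` agree on the nose; beyond it the two sides differ by one application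
  -- of `rackAct_rackAct`, the only place where self-distributivity enters.
  split_ifs <;> first
    | omega
    | rfl
    | rw [Fin.castSucc_succ]
    | rw [rackAct_rackAct op sd, Fin.succ_castSucc, Fin.succ_pred]

end RackFaces

def rackSign (ε : Bool) : ℤ := bif ε then 1 else -1

theorem shelfD_eq_alternatingFaceSum {S A : Type} [AddCommGroup A] (op : S → S → S) (n : ℕ) :
    shelfD (A := A) op n =
      alternatingFaceSum (X := fun n => Fin n → S) (rackFace op) rackSign n := by
  funext φ a
  refine Fintype.sum_congr _ _ fun i => ?_
  simp only [Fintype.sum_bool, rackSign, cond_true, cond_false, mul_one, mul_neg, neg_smul,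
    sub_eq_add_neg, smul_add, smul_neg]
  rfl

/-- For a shelf `(S, ◁)` and abelian group `A`, the rack differential squares to zero:
`d^{k+1} ∘ d^k = 0`. -/
theorem rack_differential_squares_to_zero {S A : Type} [AddCommGroup A]
    (op : S → S → S)
    (sd : ∀ a b c : S, op a (op b c) = op (op a b) (op a c))
    (k : ℕ) (φ : (Fin k → S) → A) :
    shelfD op (k + 1) (shelfD op k φ) = 0 := by
  rw [shelfD_eq_alternatingFaceSum, shelfD_eq_alternatingFaceSum]
  exact (rackFace_facesCommute op sd).alternatingFaceSum_alternatingFaceSum rackSign φ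
end

section
/- Let (S, ◁) be a shelf, A an abelian group, φ : S^k → A, and a ∈ S. Then d^k(φ ∘ τ_a^{×k}) = (d^k φ) ∘ τ_a^{×(k+1)}, where τ_a(b) = a ◁ b; i.e., the action of left translations on cochains commutes with the rack differential. -/
theorem shelfD_comp_hom {S T A : Type} [AddCommGroup A] (opS : S → S → S) (opT : T → T → T)
    (f : S → T) (hf : ∀ x y, f (opS x y) = opT (f x) (f y)) (k : ℕ) (φ : (Fin k → T) → A) :
    shelfD opS k (fun b => φ (f ∘ b)) = fun b => shelfD opT k φ (f ∘ b) := by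
  funext b
  simp only [shelfD, Function.comp_def, apply_ite f, hf]

/-- The action of left translations on cochains commutes with the rack differential:
`d^k(φ·τ_a) = (d^k φ)·τ_a`, where `(φ·τ_a)(b_1,…,b_k) = φ(a ◁ b_1, …, a ◁ b_k)`. -/
theorem rack_differential_commutes_translation {S A : Type} [AddCommGroup A]
    (op : S → S → S)
    (sd : ∀ a b c : S, op a (op b c) = op (op a b) (op a c))
    (k : ℕ) (φ : (Fin k → S) → A) (a : S) :
    shelfD op k (fun b => φ (fun j => op a (b j)))
      = fun b => shelfD op k φ (fun j => op a (b j)) :=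
  shelfD_comp_hom op op (op a) (sd a) k φ
end

section
/- Let (S, ◁) be a shelf, A an abelian group, φ : S^k → A, and b ∈ S. Then φ·τ_b − φ = (d^k φ)_b + d^{k-1}(φ_b), where φ_b denotes the partial evaluation (b_1,...,b_{k-1}) ↦ φ(b, b_1,...,b_{k-1}) and φ·τ_b(b_1,...,b_k) = φ(b ◁ b_1,...,b ◁ b_k). -/
namespace Shelf

variable {S A : Type}

/-- With `op := fun _ y => y` this is the plain deletion of `a i.castSucc`, so both kinds of face
in `shelfD` are instances of it. -/
def face (op : S → S → S) {k : ℕ} (a : Fin (k + 1) → S) (i : Fin k) : Fin k → S :=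
  fun j => if (i : ℕ) ≤ (j : ℕ) then op (a i.castSucc) (a j.succ) else a j.castSucc

theorem shelfD_eq_sum_face [AddCommGroup A] (op : S → S → S) {k : ℕ} (φ : (Fin k → S) → A)
    (a : Fin (k + 1) → S) :
    shelfD op k φ a = ∑ i : Fin k, ((-1 : ℤ) ^ (i : ℕ)) •
      (φ (face op a i) - φ (face (fun _ y => y) a i)) :=
  rfl

theorem face_cons_zero (op : S → S → S) {k : ℕ} (b : S) (c : Fin (k + 1) → S) :
    face op (Fin.cons b c) 0 = fun j => op b (c j) := by
  funext j
  simp [face]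

theorem face_cons_succ (op : S → S → S) {k : ℕ} (b : S) (c : Fin (k + 1) → S) (i : Fin k) :
    face op (Fin.cons b c) i.succ = Fin.cons b (face op c i) := by
  funext j
  induction j using Fin.cases with
  | zero => simp [face]
  | succ j =>
    simp only [face, Fin.cons_succ, Fin.val_succ, ← Fin.succ_castSucc, add_le_add_iff_right]

theorem shelfD_cons [AddCommGroup A] (op : S → S → S) {k : ℕ} (φ : (Fin (k + 1) → S) → A)
    (b : S) (c : Fin (k + 1) → S) :
    shelfD op (k + 1) φ (Fin.cons b c)
      = (φ (fun j => op b (c j)) - φ c) - shelfD op k (fun d => φ (Fin.cons b d)) c := by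
  simp only [shelfD_eq_sum_face, Fin.sum_univ_succ, face_cons_zero, face_cons_succ,
    Fin.val_zero, pow_zero, one_smul, Fin.val_succ, pow_succ, mul_neg_one, neg_smul,
    Finset.sum_neg_distrib, sub_eq_add_neg]

end Shelf

theorem translation_minus_id_is_homotopic_to_zero_general {S A : Type} [AddCommGroup A]
    (op : S → S → S)
    (k : ℕ) (φ : (Fin (k + 1) → S) → A) (b : S) :
    ∀ c : Fin (k + 1) → S,
      φ (fun j => op b (c j)) - φ c
        = shelfD op (k + 1) φ (Fin.cons b c)
          + shelfD op k (fun d => φ (Fin.cons b d)) c := by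
  intro c
  rw [Shelf.shelfD_cons]
  abel

/-- For a shelf `(S, ◁)`, a cochain `φ ∈ C^{k+1}(S,A)` and `b ∈ S`:
`φ·τ_b − φ = (dφ)_b + d(φ_b)`, where `φ_b` is the partial evaluation
`(b_1,…,b_k) ↦ φ(b, b_1,…,b_k)` and `(φ·τ_b)(b_1,…,b_{k+1}) = φ(b ◁ b_1,…,b ◁ b_{k+1})`. -/
theorem translation_minus_id_is_homotopic_to_zero {S A : Type} [AddCommGroup A]
    (op : S → S → S)
    (sd : ∀ a b c : S, op a (op b c) = op (op a b) (op a c))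
    (k : ℕ) (φ : (Fin (k + 1) → S) → A) (b : S) :
    ∀ c : Fin (k + 1) → S,
      φ (fun j => op b (c j)) - φ c
        = shelfD op (k + 1) φ (Fin.cons b c)
          + shelfD op k (fun d => φ (Fin.cons b d)) c :=
  translation_minus_id_is_homotopic_to_zero_general op k φ b
end

section
/- Every finite shelf (S, ◁) admits a rack retract, i.e., a retract S' on which the restricted operation ◁ makes S' a rack (all left translations b ↦ a ◁ b with a ∈ S' are bijections of S'). -/
/-- The translation semigroup `T_S` of a shelf `(S, op)`:
the subsemigroup of `Function.End S` generated by the left translations `τ_a : b ↦ a ◁ b`. -/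
def transSemigroup {S : Type} (op : S → S → S) : Subsemigroup (Function.End S) :=
  Subsemigroup.closure (Set.range (fun a => (fun b => op a b : Function.End S)))

/-- `S'` is a retract of the shelf `(S, op)`: it is a subshelf and there is a retraction
`t ∈ T_S` with `t(S) = S'` fixing `S'` pointwise. -/
def IsRetractOf {S : Type} (op : S → S → S) (S' : Set S) : Prop :=
  (∀ x ∈ S', ∀ y ∈ S', op x y ∈ S') ∧
    ∃ t ∈ transSemigroup op, Set.range t = S' ∧ ∀ b ∈ S', t b = b

/-!
Self-distributivity makes every element of `T_S` a shelf endomorphism. Among the elements of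
`T_S` of minimal rank `|t(S)|`, which form an ideal of the finite semigroup `T_S`, there is an
idempotent `e`, and `S' = e(S)` is a retract. For `a ∈ S'` the element `e ∘ τ_a = τ_a ∘ e` of
`T_S` has image inside `S'` and rank at least `|S'|`, so `τ_a` maps `S'` onto `S'`, bijectively
since `S'` is finite.
-/

theorem Set.Finite.exists_isIdempotentElem_of_mul_mem {M : Type*} [Semigroup M] {s : Set M}
    (hfin : s.Finite) (hne : s.Nonempty) (hmul : ∀ x ∈ s, ∀ y ∈ s, x * y ∈ s) :
    ∃ e ∈ s, IsIdempotentElem e :=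
  letI : TopologicalSpace M := ⊥
  haveI : DiscreteTopology M := ⟨rfl⟩
  exists_idempotent_in_compact_subsemigroup (fun _ => continuous_of_discreteTopology) s hne
    hfin.isCompact hmul

section

variable {S : Type} {op : S → S → S}

theorem translation_mem_transSemigroup (a : S) :
    (fun b => op a b : Function.End S) ∈ transSemigroup op :=
  Subsemigroup.subset_closure ⟨a, rfl⟩

theorem map_op_of_mem_transSemigroup (sd : ∀ a b c : S, op a (op b c) = op (op a b) (op a c))
    {t : Function.End S} (ht : t ∈ transSemigroup op) (b c : S) :
    t (op b c) = op (t b) (t c) := by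
  induction ht using Subsemigroup.closure_induction generalizing b c with
  | mem x hx =>
    obtain ⟨a, rfl⟩ := hx
    exact sd a b c
  | mul x y _ _ hx hy =>
    change x (y (op b c)) = op (x (y b)) (x (y c))
    rw [hy, hx]

theorem IsIdempotentElem.apply_of_mem_range {e : Function.End S} (he : IsIdempotentElem e)
    {b : S} (hb : b ∈ Set.range e) : e b = b := by
  obtain ⟨y, rfl⟩ := hb
  exact congrFun he y

theorem isRetractOf_range_of_isIdempotentElem
    (sd : ∀ a b c : S, op a (op b c) = op (op a b) (op a c))
    {e : Function.End S} (he : e ∈ transSemigroup op) (hidem : IsIdempotentElem e) :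
    IsRetractOf op (Set.range e) := by
  refine ⟨fun x hx y hy => ⟨op x y, ?_⟩, e, he, rfl, fun b hb => hidem.apply_of_mem_range hb⟩
  rw [map_op_of_mem_transSemigroup sd he, hidem.apply_of_mem_range hx,
    hidem.apply_of_mem_range hy]

theorem exists_isIdempotentElem_of_minimal_rank [Finite S] [Nonempty S] :
    ∃ e ∈ transSemigroup op, IsIdempotentElem e ∧
      ∀ s ∈ transSemigroup op, (Set.range e).ncard ≤ (Set.range s).ncard := by
  set T : Set (Function.End S) := ↑(transSemigroup op)
  have : Finite (Function.End S) := inferInstanceAs (Finite (S → S))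
  set K := {u ∈ T | ∀ s ∈ T, (Set.range u).ncard ≤ (Set.range s).ncard}
  have hK : K.Nonempty := by
    obtain ⟨u, hu, hmin⟩ := Set.exists_min_image T (fun u => (Set.range u).ncard)
      (Set.toFinite T) ⟨_, translation_mem_transSemigroup (Classical.arbitrary S)⟩
    exact ⟨u, hu, hmin⟩
  have hKmul : ∀ u ∈ K, ∀ v ∈ K, u * v ∈ K := fun u hu v hv =>
    ⟨mul_mem hu.1 hv.1, fun s hs => (Set.ncard_le_ncard (Set.range_comp_subset_range v u)).trans
      (hu.2 s hs)⟩
  obtain ⟨e, he, hidem⟩ := (Set.toFinite K).exists_isIdempotentElem_of_mul_mem hK hKmul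
  exact ⟨e, he.1, hidem, he.2⟩

theorem bijOn_range_of_minimal_rank [Finite S]
    (sd : ∀ a b c : S, op a (op b c) = op (op a b) (op a c))
    {e : Function.End S} (he : e ∈ transSemigroup op) (hidem : IsIdempotentElem e)
    (hmin : ∀ s ∈ transSemigroup op, (Set.range e).ncard ≤ (Set.range s).ncard)
    {a : S} (ha : a ∈ Set.range e) :
    Set.BijOn (fun b => op a b) (Set.range e) (Set.range e) := by
  have hmaps : Set.MapsTo (fun b => op a b) (Set.range e) (Set.range e) :=
    fun y hy => (isRetractOf_range_of_isIdempotentElem sd he hidem).1 a ha y hy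
  refine (Set.toFinite _).surjOn_iff_bijOn_of_mapsTo hmaps |>.mp ?_
  set τ : Function.End S := fun b => op a b
  have hrange : Set.range (e * τ) = Set.range e :=
    Set.eq_of_subset_of_ncard_le (Set.range_comp_subset_range τ e)
      (hmin _ (mul_mem he (translation_mem_transSemigroup a))) (Set.toFinite _)
  have hcomm : ∀ y, (e * τ) y = op a (e y) := fun y => by
    change e (op a y) = _
    rw [map_op_of_mem_transSemigroup sd he, hidem.apply_of_mem_range ha]
  rintro x hx
  obtain ⟨y, rfl⟩ := hrange ▸ hx
  exact ⟨e y, ⟨y, rfl⟩, (hcomm y).symm⟩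

end

/-- Every finite (nonempty) shelf admits a rack retract: a retract `S'` on which all left
translations by elements of `S'` are bijections of `S'`. -/
theorem finite_shelf_has_rack_retract {S : Type} [Finite S] [Nonempty S]
    (op : S → S → S)
    (sd : ∀ a b c : S, op a (op b c) = op (op a b) (op a c)) :
    ∃ S' : Set S, IsRetractOf op S' ∧ ∀ a ∈ S', Set.BijOn (fun b => op a b) S' S' := by
  obtain ⟨e, he, hidem, hmin⟩ := exists_isIdempotentElem_of_minimal_rank (op := op)
  exact ⟨Set.range e, isRetractOf_range_of_isIdempotentElem sd he hidem,
    fun a ha => bijOn_range_of_minimal_rank sd he hidem hmin ha⟩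
end

section
/- The free monogenic shelf F_1 admits no semi-strong projector over any nonzero commutative ring R: there is no nonzero element P of the semigroup algebra R[T_{F_1}] satisfying P·τ_a = P for all a ∈ F_1. (Key lemma: there is a length function l : F_1 → ℕ with l(γ) = 1 for the generator γ and l(a ◁ b) = l(b) + 1 for all a, b, so every translation τ_a raises length by exactly 1.) -/
theorem MonoidAlgebra.eq_zero_of_mul_single_eq_self {R G α : Type*} [Semiring R] [Mul G]
    [LinearOrder α] (w : G → α) (g : G) (hw : ∀ x, w x < w (x * g)) (r : R)
    {P : MonoidAlgebra R G} (hP : P * single g r = P) : P = 0 := by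
  classical
  by_contra hP0
  have hsupp : P.coeff.support.Nonempty := by simpa using hP0
  obtain ⟨t, ht, hmin⟩ := P.coeff.support.exists_min_image w hsupp
  rw [← hP] at ht
  obtain ⟨s, hs, rfl⟩ := Finset.mem_image.mp (support_coeff_mul_single_subset P r g ht)
  exact (hmin s hs).not_gt (hw s)

theorem exists_add_of_mem_transSemigroup {S : Type} {op : S → S → S} (ℓ : S → ℕ)
    (hℓ : ∀ a b, ℓ (op a b) = ℓ b + 1) {t : Function.End S} (ht : t ∈ transSemigroup op) :
    ∃ k, ∀ b, ℓ (t b) = ℓ b + k := by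
  induction ht using Subsemigroup.closure_induction with
  | mem _ h =>
    obtain ⟨a, rfl⟩ := h
    exact ⟨1, hℓ a⟩
  | mul x y _ _ hx hy =>
    obtain ⟨k, hk⟩ := hx
    obtain ⟨m, hm⟩ := hy
    refine ⟨m + k, fun b => ?_⟩
    change ℓ (x (y b)) = ℓ b + (m + k)
    rw [hk, hm, add_assoc]

theorem free_shelf_no_semistrong_projector_general {F : Type} (op : F → F → F)
    (γ : F)
    (hfree : ∀ (S : Type) (op' : S → S → S),
      (∀ a b c : S, op' a (op' b c) = op' (op' a b) (op' a c)) →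
      ∀ s : S, ∃! f : F → S, f γ = s ∧ ∀ a b : F, f (op a b) = op' (f a) (f b))
    (R : Type) [CommRing R]
    (P : MonoidAlgebra R (transSemigroup op))
    (hP : ∀ a : F,
      P * MonoidAlgebra.single
        (⟨(fun b => op a b : Function.End F),
          Subsemigroup.subset_closure ⟨a, rfl⟩⟩ : transSemigroup op) (1 : R) = P) :
    P = 0 := by
  obtain ⟨ℓ, ⟨-, hℓ⟩, -⟩ := hfree ℕ (fun _ n => n + 1) (fun _ _ _ => rfl) 0
  refine MonoidAlgebra.eq_zero_of_mul_single_eq_self (fun t => ℓ (t.1 γ)) _ (fun x => ?_) _ (hP γ)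
  obtain ⟨k, hk⟩ := exists_add_of_mem_transSemigroup ℓ hℓ x.2
  change ℓ (x.1 (op γ γ)) > ℓ (x.1 γ)
  rw [hk, hk, hℓ]
  omega

/-- The free monogenic shelf `F_1` (here characterized by its universal property: for each
shelf `(S', ◁')` and `s ∈ S'` there is a unique shelf morphism `F_1 → S'` with `γ ↦ s`)
admits no semi-strong projector over any nonzero commutative ring `R`:
no nonzero `P` in the semigroup algebra `R[T_{F_1}]` satisfies `P·τ_a = P` for all `a`. -/
theorem free_shelf_no_semistrong_projector {F : Type} (op : F → F → F)
    (sd : ∀ a b c : F, op a (op b c) = op (op a b) (op a c)) (γ : F)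
    (hfree : ∀ (S : Type) (op' : S → S → S),
      (∀ a b c : S, op' a (op' b c) = op' (op' a b) (op' a c)) →
      ∀ s : S, ∃! f : F → S, f γ = s ∧ ∀ a b : F, f (op a b) = op' (f a) (f b))
    (R : Type) [CommRing R] [Nontrivial R]
    (P : MonoidAlgebra R (transSemigroup op))
    (hP : ∀ a : F,
      P * MonoidAlgebra.single
        (⟨(fun b => op a b : Function.End F),
          Subsemigroup.subset_closure ⟨a, rfl⟩⟩ : transSemigroup op) (1 : R) = P) :
    P = 0 :=
  free_shelf_no_semistrong_projector_general op γ hfree R P hP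
end

section
/- Let (S, ◁) be a shelf, φ : S^k → A a cochain invariant under all translations (φ(a ◁ b_1, ..., a ◁ b_k) = φ(b_1,...,b_k) for all a ∈ S), and b ∈ S. Then (d^k φ)_b = −d^{k-1}(φ_b) + (φ·τ_b − φ) = −d^{k-1}(φ_b); in particular, if additionally φ·τ_b = φ, the partial evaluation of the coboundary satisfies (d^k φ)_b = −d^{k-1}(φ_b). -/
theorem Fin.cons_castSucc_ite_succ {S : Type} {k : ℕ} (b : S) (c g : Fin (k + 1) → S)
    (i : Fin k) :
    (fun j : Fin (k + 1) => if (i.succ : ℕ) ≤ (j : ℕ) then g j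
      else (Fin.cons b c : Fin (k + 2) → S) j.castSucc)
      = Fin.cons b (fun j : Fin k => if (i : ℕ) ≤ (j : ℕ) then g j.succ else c j.castSucc) := by
  funext j
  refine Fin.cases ?_ (fun j => ?_) j
  · simp
  · simp only [Fin.cons_succ, Fin.val_succ, Nat.succ_le_succ_iff, ← Fin.succ_castSucc]

theorem shelfD_succ_cons {S A : Type} [AddCommGroup A] (op : S → S → S) {k : ℕ}
    (φ : (Fin (k + 1) → S) → A) (b : S) (c : Fin (k + 1) → S) :
    shelfD op (k + 1) φ (Fin.cons b c)
      = (φ (fun j => op b (c j)) - φ c) - shelfD op k (fun d => φ (Fin.cons b d)) c := by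
  unfold shelfD
  rw [Fin.sum_univ_succ, sub_eq_add_neg (_ - _), ← Finset.sum_neg_distrib]
  congr 1
  · simp
  refine Finset.sum_congr rfl fun i _ => ?_
  simp only [Fin.cons_succ, ← Fin.succ_castSucc]
  rw [Fin.cons_castSucc_ite_succ, Fin.cons_castSucc_ite_succ, Fin.val_succ, pow_succ, mul_neg_one,
    neg_smul]

theorem invariant_coboundary_partial_evaluation_general {S A : Type} [AddCommGroup A]
    (op : S → S → S)
    (k : ℕ) (φ : (Fin (k + 1) → S) → A)
    (hinv : ∀ a : S, (fun b : Fin (k + 1) → S => φ (fun j => op a (b j))) = φ)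
    (b : S) :
    ∀ c : Fin (k + 1) → S,
      shelfD op (k + 1) φ (Fin.cons b c)
        = - shelfD op k (fun d => φ (Fin.cons b d)) c := by
  intro c
  rw [shelfD_succ_cons, congrFun (hinv b) c, sub_self, zero_sub]

/-- For an `S`-invariant cochain `φ` (i.e. `φ·τ_a = φ` for all `a`), the partial
evaluation of its coboundary satisfies `(d φ)_b = −d(φ_b)`. -/
theorem invariant_coboundary_partial_evaluation {S A : Type} [AddCommGroup A]
    (op : S → S → S)
    (sd : ∀ a b c : S, op a (op b c) = op (op a b) (op a c))
    (k : ℕ) (φ : (Fin (k + 1) → S) → A)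
    (hinv : ∀ a : S, (fun b : Fin (k + 1) → S => φ (fun j => op a (b j))) = φ)
    (b : S) :
    ∀ c : Fin (k + 1) → S,
      shelfD op (k + 1) φ (Fin.cons b c)
        = - shelfD op k (fun d => φ (Fin.cons b d)) c :=
  invariant_coboundary_partial_evaluation_general op k φ hinv b
end

section
/- For the cyclic rack C_{0,m} = (ℤ/m, a ◁ b = b + 1) and k ≥ 2 written as 2s or 2s+1, the map φ⁰(b_1,...,b_k) = 1 if b_2 = b_4 = ... = b_{2s} = m−1 (i.e., all even-indexed entries equal m−1) and 0 otherwise, is a k-cocycle: d^k φ⁰ = 0, where d^k is the rack differential with integer coefficients. -/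
def tailSplice {S : Type} {k : ℕ} (i : ℕ) (x y : Fin k → S) : Fin k → S :=
  fun j => if i ≤ (j : ℕ) then x j else y j

section tailSplice

variable {S : Type} {k : ℕ}

theorem tailSplice_succ_apply_of_ne {i : ℕ} (x y : Fin k → S) {j : Fin k} (hj : (j : ℕ) ≠ i) :
    tailSplice (i + 1) x y j = tailSplice i x y j := by
  have hiff : i + 1 ≤ (j : ℕ) ↔ i ≤ (j : ℕ) := by omega
  simp only [tailSplice, hiff]

theorem tailSplice_of_le {i : ℕ} (hi : k ≤ i) (x y : Fin k → S) : tailSplice i x y = y := by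
  funext j
  have : ¬ i ≤ (j : ℕ) := by omega
  simp only [tailSplice, if_neg this]

end tailSplice

/-- Odd 0-based indices are the even 1-based ones: `φ` only sees `b_2, b_4, …`. -/
def DependsOnlyOnOddCoords {S A : Type} {k : ℕ} (φ : (Fin k → S) → A) : Prop :=
  ∀ b b' : Fin k → S, (∀ j : Fin k, (j : ℕ) % 2 = 1 → b j = b' j) → φ b = φ b'

theorem DependsOnlyOnOddCoords.tailSplice_two_mul_succ {S A : Type} {k : ℕ}
    {φ : (Fin k → S) → A} (hφ : DependsOnlyOnOddCoords φ) (t : ℕ) (x y : Fin k → S) :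
    φ (tailSplice (2 * t + 1) x y) = φ (tailSplice (2 * t) x y) :=
  hφ _ _ fun _ hj => tailSplice_succ_apply_of_ne x y (by omega)

section AlternatingSum

variable {A : Type} [AddCommGroup A]

theorem sum_range_two_mul_neg_one_pow_smul_eq_zero {G : ℕ → A}
    (hG : ∀ t, G (2 * t + 1) = G (2 * t)) (n : ℕ) :
    ∑ i ∈ Finset.range (2 * n), (-1 : ℤ) ^ i • G i = 0 := by
  induction n with
  | zero => simp
  | succ n ih =>
    rw [Nat.mul_succ, Finset.sum_range_succ, Finset.sum_range_succ, ih, hG, pow_succ,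
      mul_neg_one, neg_smul, zero_add, add_neg_cancel]

theorem sum_range_neg_one_pow_smul_eq_zero {G : ℕ → A} {k : ℕ}
    (hG : ∀ t, G (2 * t + 1) = G (2 * t)) (hvanish : ∀ i, k ≤ i → G i = 0) :
    ∑ i ∈ Finset.range k, (-1 : ℤ) ^ i • G i = 0 := by
  rw [Finset.sum_subset (Finset.range_subset_range.2 (Nat.le_mul_of_pos_left k two_pos))
    fun i _ hi => by rw [hvanish i (by simpa using hi), smul_zero]]
  exact sum_range_two_mul_neg_one_pow_smul_eq_zero hG k

end AlternatingSum

/-- Since `a ◁ b` ignores `a`, the faces with indices `2t` and `2t+1` differ only in coordinate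
`2t`, which `φ` does not see, so they cancel in the alternating sum. -/
theorem shelfD_eq_zero_of_dependsOnlyOnOddCoords {S A : Type} [AddCommGroup A] (f : S → S)
    {k : ℕ} {φ : (Fin k → S) → A} (hφ : DependsOnlyOnOddCoords φ) :
    shelfD (fun _ b => f b) k φ = 0 := by
  funext a
  set G : ℕ → A := fun i =>
    φ (tailSplice i (fun j => f (a j.succ)) fun j => a j.castSucc) -
      φ (tailSplice i (fun j => a j.succ) fun j => a j.castSucc)
  have hpair (t : ℕ) : G (2 * t + 1) = G (2 * t) := by
    simp only [G, hφ.tailSplice_two_mul_succ]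
  have hvanish (i : ℕ) (hi : k ≤ i) : G i = 0 := by
    simp only [G, tailSplice_of_le hi, sub_self]
  exact (Fin.sum_univ_eq_sum_range (fun i => (-1 : ℤ) ^ i • G i) k).trans
    (sum_range_neg_one_pow_smul_eq_zero hpair hvanish)

theorem cyclic_rack_cocycle_general (m : ℕ) (k : ℕ) :
    shelfD (fun _ b => b + 1) k
      (fun b : Fin k → ZMod m =>
        if ∀ i : Fin k, (i : ℕ) % 2 = 1 → b i = ((m - 1 : ℕ) : ZMod m)
        then (1 : ℤ) else 0) = 0 := by
  refine shelfD_eq_zero_of_dependsOnlyOnOddCoords _ fun b b' hbb' => ?_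
  have hiff : (∀ i : Fin k, (i : ℕ) % 2 = 1 → b i = ((m - 1 : ℕ) : ZMod m)) ↔
      ∀ i : Fin k, (i : ℕ) % 2 = 1 → b' i = ((m - 1 : ℕ) : ZMod m) :=
    forall_congr' fun i => imp_congr_right fun hi => by rw [hbb' i hi]
  simp only [hiff]

/-- For the cyclic rack `C_{0,m} = (ℤ/m, a ◁ b = b+1)` and `k ≥ 2` written as `2s` or
`2s+1`, the indicator `φ⁰` of tuples whose even-indexed entries `b_2, b_4, …, b_{2s}`
(1-based) all equal `m − 1` is a `k`-cocycle: `d^k φ⁰ = 0`. -/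
theorem cyclic_rack_cocycle (m : ℕ) (hm : 1 ≤ m) (k s : ℕ) (hk : 2 ≤ k)
    (hs : k = 2 * s ∨ k = 2 * s + 1) :
    shelfD (fun _ b => b + 1) k
      (fun b : Fin k → ZMod m =>
        if ∀ i : Fin k, (i : ℕ) % 2 = 1 → b i = ((m - 1 : ℕ) : ZMod m)
        then (1 : ℤ) else 0) = 0 :=
  cyclic_rack_cocycle_general m k
end

section
/- For the cyclic rack C_{0,m} (m ≥ 1), k ≥ 0 written as 2s or 2s+1, and any coboundary φ = d^{k-1}ψ with integer coefficients, one has Σ_{b ∈ D_{m,k}} φ(b) = 0, where D_{m,k} = { b ∈ {0,...,m−1}^k : b_1 = b_2 + 1 mod m, b_3 = b_4 + 1 mod m, ..., b_{2s−1} = b_{2s} + 1 mod m, and b_{2s+1} = 0 if k = 2s+1 }. -/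
open Finset

theorem Finset.sum_range_eq_zero_of_pairs {M : Type*} [AddCommMonoid M] (f : ℕ → M) (k : ℕ)
    (hpair : ∀ n, n % 2 = 0 → n + 1 < k → f n + f (n + 1) = 0)
    (hlast : ∀ n, n % 2 = 0 → n + 1 = k → f n = 0) :
    ∑ n ∈ range k, f n = 0 := by
  have hEven : ∀ q, 2 * q ≤ k → ∑ n ∈ range (2 * q), f n = 0 := by
    intro q
    induction q with
    | zero => simp
    | succ q ih =>
      intro hq
      rw [mul_add, mul_one, sum_range_succ, sum_range_succ, add_assoc, ih (by omega),
        hpair (2 * q) (by omega) (by omega), zero_add]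
  obtain ⟨q, rfl | rfl⟩ := Nat.even_or_odd' k
  · exact hEven q le_rfl
  · rw [sum_range_succ, hEven q (by omega), hlast (2 * q) (by omega) rfl, add_zero]

namespace CyclicShelf

variable {S : Type} [AddCommGroup S]

/-- For `c = 1` this is membership in the paper's `D_{m,k}`, written with 0-based indices. -/
def IsShiftPaired (c : S) {n : ℕ} (b : Fin n → S) : Prop :=
  ∀ i : Fin n, (i : ℕ) % 2 = 0 →
    if h : (i : ℕ) + 1 < n then b i = b ⟨(i : ℕ) + 1, h⟩ + c else b i = 0

def face {k : ℕ} (i : ℕ) (b : Fin (k + 1) → S) : Fin k → S :=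
  fun j => if i ≤ (j : ℕ) then b j.succ else b j.castSucc

def shiftFace {k : ℕ} (c : S) (i : ℕ) (b : Fin (k + 1) → S) : Fin k → S :=
  fun j => if i ≤ (j : ℕ) then b j.succ + c else b j.castSucc

def pairConst {n : ℕ} (p : ℕ) (d : S) : Fin n → S :=
  fun i => if (i : ℕ) = p ∨ (i : ℕ) = p + 1 then d else 0

theorem shelfD_add_right_apply {A : Type} [AddCommGroup A] {k : ℕ} (c : S)
    (ψ : (Fin k → S) → A) (b : Fin (k + 1) → S) :
    shelfD (fun _ x => x + c) k ψ b =
      ∑ i : Fin k, ((-1 : ℤ) ^ (i : ℕ)) • (ψ (shiftFace c i b) - ψ (face i b)) :=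
  rfl

variable {k : ℕ} {c : S} {b : Fin (k + 1) → S}

theorem IsShiftPaired.castSucc_eq (hb : IsShiftPaired c b) (j : Fin k) (hj : (j : ℕ) % 2 = 0) :
    b j.castSucc = b j.succ + c := by
  have h := hb j.castSucc hj
  rwa [dif_pos (by simp)] at h

theorem isShiftPaired_add_pairConst_iff (p : ℕ) (hp : p % 2 = 0) (hpk : p < k) (d : S) :
    IsShiftPaired c (b + pairConst p d) ↔ IsShiftPaired c b := by
  refine forall_congr' fun i => imp_congr_right fun hi => ?_
  simp only [Pi.add_apply, pairConst]
  -- at `i = p` both entries move by `d`; otherwise, by parity, neither entry moves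
  split_ifs <;> first
    | rw [add_right_comm _ d c, add_left_inj]
    | omega
    | simp only [add_zero]

theorem shiftFace_eq_shiftFace_succ (j : Fin k) (h : b j.castSucc = b j.succ + c) :
    shiftFace c j b = shiftFace c ((j : ℕ) + 1) b := by
  funext i
  simp only [shiftFace]
  rcases lt_trichotomy (i : ℕ) j with hij | hij | hij
  · rw [if_neg (by omega), if_neg (by omega)]
  · rw [if_pos hij.ge, if_neg (by omega), Fin.ext hij, h]
  · rw [if_pos hij.le, if_pos (by omega)]

theorem face_succ_add_pairConst_neg (j : Fin k) (h : b j.castSucc = b j.succ + c) :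
    face ((j : ℕ) + 1) (b + pairConst j (-c)) = face j b := by
  funext i
  simp only [face, pairConst, Pi.add_apply, Fin.val_succ, Fin.val_castSucc]
  rcases lt_trichotomy (i : ℕ) j with hij | hij | hij
  · rw [if_neg (by omega), if_neg (by omega), if_neg (by omega), add_zero]
  · rw [if_neg (by omega), if_pos (by omega), if_pos hij.ge, Fin.ext hij, h, add_neg_cancel_right]
  · rw [if_pos (by omega), if_neg (by omega), if_pos hij.le, add_zero]

theorem face_add_pairConst_of_last (j : Fin k) (hj : (j : ℕ) + 1 = k) :
    face j (b + pairConst j c) = shiftFace c j b := by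
  funext i
  simp only [face, shiftFace, pairConst, Pi.add_apply, Fin.val_succ, Fin.val_castSucc]
  by_cases hij : (j : ℕ) ≤ i
  · rw [if_pos hij, if_pos hij, if_pos (by omega)]
  · rw [if_neg hij, if_neg hij, if_neg (by omega), add_zero]

variable [Fintype S] {A : Type} [AddCommGroup A] (ψ : (Fin k → S) → A)
  [DecidablePred (IsShiftPaired c : (Fin (k + 1) → S) → Prop)]

theorem sum_shiftFace_eq_sum_shiftFace_succ (n : ℕ) (hn : n % 2 = 0) (hnk : n < k) :
    ∑ b ∈ univ.filter (IsShiftPaired c), ψ (shiftFace c n b) =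
      ∑ b ∈ univ.filter (IsShiftPaired c), ψ (shiftFace c (n + 1) b) :=
  sum_congr rfl fun b hb => by
    rw [shiftFace_eq_shiftFace_succ ⟨n, hnk⟩ ((mem_filter.1 hb).2.castSucc_eq ⟨n, hnk⟩ hn)]

theorem sum_face_eq_sum_face_succ (n : ℕ) (hn : n % 2 = 0) (hnk : n < k) :
    ∑ b ∈ univ.filter (IsShiftPaired c), ψ (face n b) =
      ∑ b ∈ univ.filter (IsShiftPaired c), ψ (face (n + 1) b) :=
  sum_equiv (Equiv.addRight (pairConst n (-c)))
    (fun b => by simp only [mem_filter, mem_univ, true_and, Equiv.coe_addRight,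
      isShiftPaired_add_pairConst_iff n hn hnk])
    (fun b hb => by
      rw [Equiv.coe_addRight,
        face_succ_add_pairConst_neg ⟨n, hnk⟩ ((mem_filter.1 hb).2.castSucc_eq ⟨n, hnk⟩ hn)])

theorem sum_shiftFace_eq_sum_face_of_last (n : ℕ) (hn : n % 2 = 0) (hnk : n + 1 = k) :
    ∑ b ∈ univ.filter (IsShiftPaired c), ψ (shiftFace c n b) =
      ∑ b ∈ univ.filter (IsShiftPaired c), ψ (face n b) :=
  sum_equiv (Equiv.addRight (pairConst n c))
    (fun b => by simp only [mem_filter, mem_univ, true_and, Equiv.coe_addRight,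
      isShiftPaired_add_pairConst_iff n hn hnk.le])
    (fun b _ => by rw [Equiv.coe_addRight, face_add_pairConst_of_last ⟨n, by omega⟩ hnk])

theorem sum_shelfD_add_right_eq_zero :
    ∑ b ∈ univ.filter (IsShiftPaired c), shelfD (fun _ x => x + c) k ψ b = 0 := by
  set D := univ.filter (IsShiftPaired c : (Fin (k + 1) → S) → Prop)
  have hsum : ∑ b ∈ D, shelfD (fun _ x => x + c) k ψ b =
      ∑ n ∈ range k, (-1 : ℤ) ^ n • (∑ b ∈ D, ψ (shiftFace c n b) - ∑ b ∈ D, ψ (face n b)) := by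
    simp only [shelfD_add_right_apply, ← sum_sub_distrib, smul_sum]
    rw [sum_comm, Fin.sum_univ_eq_sum_range
      (fun n => ∑ b ∈ D, (-1 : ℤ) ^ n • (ψ (shiftFace c n b) - ψ (face n b)))]
  rw [hsum]
  refine sum_range_eq_zero_of_pairs _ k (fun n hn hnk => ?_) (fun n hn hnk => ?_)
  · rw [sum_shiftFace_eq_sum_shiftFace_succ ψ n hn (by omega),
      sum_face_eq_sum_face_succ ψ n hn (by omega), pow_succ, mul_neg_one, neg_smul,
      add_neg_cancel]
  · rw [sum_shiftFace_eq_sum_face_of_last ψ n hn hnk, sub_self, smul_zero]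

end CyclicShelf

open CyclicShelf

open Classical in
theorem cyclic_rack_coboundary_sum_over_D_general (m : ℕ) [NeZero m] (k : ℕ)
    (ψ : (Fin k → ZMod m) → ℤ) :
    ∑ b ∈ Finset.univ.filter (fun b : Fin (k + 1) → ZMod m =>
        ∀ i : Fin (k + 1), (i : ℕ) % 2 = 0 →
          (if h : (i : ℕ) + 1 < k + 1 then b i = b ⟨(i : ℕ) + 1, h⟩ + 1 else b i = 0)),
      shelfD (fun _ b => b + 1) k ψ b = 0 := by
  -- the two filters agree up to their decidability instances
  convert sum_shelfD_add_right_eq_zero (c := (1 : ZMod m)) ψ using 3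
  exact Iff.rfl

open Classical in
theorem cyclic_rack_coboundary_sum_over_D (m : ℕ) [NeZero m] (k s : ℕ)
    (hs : k + 1 = 2 * s ∨ k + 1 = 2 * s + 1)
    (ψ : (Fin k → ZMod m) → ℤ) :
    ∑ b ∈ Finset.univ.filter (fun b : Fin (k + 1) → ZMod m =>
        ∀ i : Fin (k + 1), (i : ℕ) % 2 = 0 →
          (if h : (i : ℕ) + 1 < k + 1 then b i = b ⟨(i : ℕ) + 1, h⟩ + 1 else b i = 0)),
      shelfD (fun _ b => b + 1) k ψ b = 0 :=
  cyclic_rack_coboundary_sum_over_D_general m k ψ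
end

section
/- For the cyclic rack C_{0,m} with m ≥ 1 and k ≥ 0 written as 2s or 2s+1, the constant 1-valued k-cochain φ_const and the cocycle φ⁰ (the indicator of tuples whose even-indexed entries all equal m−1) satisfy: the total sums over all of (ℤ/m)^k are Σ φ_const = m^k and Σ φ⁰ = m^{k−s}, and for every (k−1)-cochain ψ, Σ_{b ∈ (ℤ/m)^k} (d^{k-1}ψ)(b) = 0. Consequently, if φ_const = α·φ⁰ + d^{k-1}ψ for some integer α and some ψ, then α = m^s. -/
open Finset

section Faces

variable {S A : Type} [Fintype S] [AddCommMonoid A] {k : ℕ}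

theorem sum_comp_succAbove_bijective (p : Fin (k + 1)) (f : S → Fin k → S → S)
    (hf : ∀ x j, Function.Bijective (f x j)) (ψ : (Fin k → S) → A) :
    ∑ b : Fin (k + 1) → S, ψ (fun j => f (b p) j (b (p.succAbove j))) =
      Fintype.card S • ∑ c, ψ c := by
  rw [← (Fin.insertNthEquiv (fun _ => S) p).sum_comp, Fintype.sum_prod_type]
  simp only [Fin.insertNthEquiv_apply, Fin.insertNth_apply_same, Fin.insertNth_apply_succAbove]
  have hfiber : ∀ x : S, ∑ v : Fin k → S, ψ (fun j => f x j (v j)) = ∑ c, ψ c := fun x =>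
    (Equiv.piCongrRight fun j => Equiv.ofBijective _ (hf x j)).sum_comp ψ
  simp only [hfiber, sum_const, card_univ]

theorem succAbove_castSucc_eq_ite (i j : Fin k) :
    i.castSucc.succAbove j = if i ≤ j then j.succ else j.castSucc := by
  split_ifs with h
  · exact Fin.succAbove_castSucc_of_le i j h
  · exact Fin.succAbove_castSucc_of_lt i j (not_le.mp h)

end Faces

theorem sum_shelfD_eq_zero {S A : Type} [Fintype S] [AddCommGroup A] (op : S → S → S)
    (hop : ∀ a, Function.Bijective (op a)) (k : ℕ) (ψ : (Fin k → S) → A) :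
    ∑ b, shelfD op k ψ b = 0 := by
  unfold shelfD
  rw [sum_comm]
  refine sum_eq_zero fun i _ => ?_
  have hface : ∀ g : S → S → S, (∀ x, Function.Bijective (g x)) →
      ∑ b : Fin (k + 1) → S,
        ψ (fun j => if (i : ℕ) ≤ (j : ℕ) then g (b i.castSucc) (b j.succ) else b j.castSucc) =
      Fintype.card S • ∑ c, ψ c := by
    intro g hg
    convert sum_comp_succAbove_bijective i.castSucc
      (fun x j y => if i ≤ j then g x y else y)
      (fun x j => by split_ifs; exacts [hg x, Function.bijective_id]) ψ using 4 with b _ j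
    rw [succAbove_castSucc_eq_ite]
    simp only [Fin.le_def]
    split_ifs <;> rfl
  rw [← smul_sum, sum_sub_distrib, hface op hop, hface (fun _ y => y)
    (fun _ => Function.bijective_id), sub_self, smul_zero]

theorem sum_boole_forall_imp_eq {ι S R : Type*} [Fintype ι] [DecidableEq ι] [Fintype S]
    [DecidableEq S] [CommSemiring R] (P : ι → Prop) [DecidablePred P] (c : ι → S) :
    ∑ b : ι → S, (if ∀ i, P i → b i = c i then (1 : R) else 0) =
      ∏ i, if P i then 1 else (Fintype.card S : R) := by
  refine (sum_congr rfl fun b _ => Fintype.prod_boole.symm).trans ?_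
  rw [← Fintype.prod_sum fun i (x : S) => if P i → x = c i then (1 : R) else 0]
  refine prod_congr rfl fun i _ => ?_
  by_cases hi : P i <;> simp [hi]

theorem prod_ite_odd_eq_pow {M : Type*} [CommMonoid M] (x : M) (n : ℕ) :
    ∏ i : Fin n, (if (i : ℕ) % 2 = 1 then 1 else x) = x ^ ((n + 1) / 2) := by
  induction n with
  | zero => simp
  | succ n ih =>
    simp only [Fin.prod_univ_castSucc, Fin.val_castSucc, ih, Fin.val_last]
    rcases Nat.mod_two_eq_zero_or_one n with h | h
    · rw [if_neg (by omega), ← pow_succ]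
      congr 1
      omega
    · rw [if_pos h, mul_one]
      congr 1
      omega

/-- For the cyclic rack `C_{0,m}` in degree `k+1` (written `2s` or `2s+1`):
the constant cochain `φ_const = 1` has total sum `m^(k+1)`, the cocycle `φ⁰`
(indicator of tuples whose even-indexed entries equal `m−1`) has total sum `m^(k+1−s)`,
every coboundary has total sum `0`; consequently if `φ_const = α·φ⁰ + dψ` then `α = m^s`. -/
theorem cyclic_rack_constant_class (m : ℕ) [NeZero m] (k s : ℕ)
    (hs : k + 1 = 2 * s ∨ k + 1 = 2 * s + 1) :
    (∑ _b : Fin (k + 1) → ZMod m, (1 : ℤ)) = (m : ℤ) ^ (k + 1) ∧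
    (∑ b : Fin (k + 1) → ZMod m,
        (if ∀ i : Fin (k + 1), (i : ℕ) % 2 = 1 → b i = ((m - 1 : ℕ) : ZMod m)
         then (1 : ℤ) else 0)) = (m : ℤ) ^ (k + 1 - s) ∧
    (∀ ψ : (Fin k → ZMod m) → ℤ,
      ∑ b : Fin (k + 1) → ZMod m, shelfD (fun _ b => b + 1) k ψ b = 0) ∧
    (∀ (α : ℤ) (ψ : (Fin k → ZMod m) → ℤ),
      (∀ b : Fin (k + 1) → ZMod m,
        (1 : ℤ) = α * (if ∀ i : Fin (k + 1), (i : ℕ) % 2 = 1 →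
              b i = ((m - 1 : ℕ) : ZMod m) then (1 : ℤ) else 0)
          + shelfD (fun _ b => b + 1) k ψ b) →
      α = (m : ℤ) ^ s) := by
  have hconst : (∑ _b : Fin (k + 1) → ZMod m, (1 : ℤ)) = (m : ℤ) ^ (k + 1) := by
    simp [ZMod.card]
  have hcocycle : (∑ b : Fin (k + 1) → ZMod m,
      (if ∀ i : Fin (k + 1), (i : ℕ) % 2 = 1 → b i = ((m - 1 : ℕ) : ZMod m)
       then (1 : ℤ) else 0)) = (m : ℤ) ^ (k + 1 - s) := by
    have h := sum_boole_forall_imp_eq (R := ℤ) (fun i : Fin (k + 1) => (i : ℕ) % 2 = 1)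
      (fun _ => ((m - 1 : ℕ) : ZMod m))
    rw [ZMod.card, prod_ite_odd_eq_pow, show (k + 1 + 1) / 2 = k + 1 - s by omega] at h
    -- `convert` only has to reconcile the decidability instances of the two `if`s.
    convert h
  have hcoboundary : ∀ ψ : (Fin k → ZMod m) → ℤ,
      ∑ b : Fin (k + 1) → ZMod m, shelfD (fun _ b => b + 1) k ψ b = 0 :=
    sum_shelfD_eq_zero _ (fun _ => (Equiv.addRight 1).bijective) k
  refine ⟨hconst, hcocycle, hcoboundary, fun α ψ h => ?_⟩
  have hsum := congrArg (fun f : (Fin (k + 1) → ZMod m) → ℤ => ∑ b, f b) (funext h)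
  simp only [sum_add_distrib, ← mul_sum, hconst, hcocycle, hcoboundary, add_zero] at hsum
  have hpow : (m : ℤ) ^ (k + 1) = (m : ℤ) ^ s * (m : ℤ) ^ (k + 1 - s) := by
    rw [← pow_add]
    congr 1
    omega
  exact (mul_right_cancel₀ (pow_ne_zero _ (Nat.cast_ne_zero.mpr (NeZero.ne m)))
    (hpow.symm.trans hsum)).symm
end
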